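/- Fix a nominal reward R₀ : S → A → ℝ, α > 0, and p ∈ (1,∞) with Hölder conjugate q = p/(p-1). Define F : (S → A → ℝ) → ℝ by F(π) = ∑_{s,a} D(π)(s,a) * R₀(s,a) - α * (∑_{s,a} D(π)(s,a)^q)^{1/q}, where D(π)(s,a) = (μᵀ (I - γ P^π)⁻¹)(s) * π(s,a) (Mathlib matrix inverse; genuine inverse at every policy); on policies, F equals the reward-robust return min_{‖R-R₀‖_p ≤ α} ρ^π_R. Let π be a policy with π(s,a) > 0 for all (s,a). Let R*(s,a) = R₀(s,a) - α * (D(π)(s,a)/‖D(π)‖_q)^(q-1) be the worst-case reward at π, let v* = (I - γ P^π)⁻¹ (R*)^π with (R*)^π(s) = ∑_a π s a * R*(s,a), and let Q*(s,a) = R*(s,a) + γ * ∑_{s'} P s a s' * v*(s'). Then F is differentiable at π and its Fréchet derivative satisfies, for every direction u : S → A → ℝ, DF(π)[u] = ∑_{s,a} d^π(s) * Q*(s,a) * u(s,a), where d^π(s) = (μᵀ (I - γ P^π)⁻¹)(s). -/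

import Mathlib

open Finset

noncomputable section

/-- `P^π(s,s') = ∑ a, π s a * P s a s'`. -/
def Pmat {S A : Type*} [Fintype A] (P : S → A → S → ℝ) (π : S → A → ℝ) :
    Matrix S S ℝ := fun s s' => ∑ a, π s a * P s a s'

/-- state occupation measure `d^π = μᵀ (I - γ P^π)⁻¹`. -/
def dPi {S A : Type*} [Fintype S] [Fintype A] [DecidableEq S]
    (γ : ℝ) (P : S → A → S → ℝ) (μ : S → ℝ) (π : S → A → ℝ) : S → ℝ :=
  fun s' => ∑ s, μ s * (1 - γ • Pmat P π)⁻¹ s s'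

/-- state-action occupation measure `d^π(s,a) = d^π(s) * π s a`. -/
def dSA {S A : Type*} [Fintype S] [Fintype A] [DecidableEq S]
    (γ : ℝ) (P : S → A → S → ℝ) (μ : S → ℝ) (π : S → A → ℝ) : S → A → ℝ :=
  fun s a => dPi γ P μ π s * π s a

/-- return `ρ^π_R = ∑_{s,a} d^π(s,a) * R(s,a)`. -/
def mdpReturn {S A : Type*} [Fintype S] [Fintype A] [DecidableEq S]
    (γ : ℝ) (P : S → A → S → ℝ) (μ : S → ℝ) (π : S → A → ℝ) (R : S → A → ℝ) : ℝ :=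
  ∑ s, ∑ a, dSA γ P μ π s a * R s a

/-- `‖x‖_r = (∑_{s,a} |x(s,a)|^r)^{1/r}` with real exponents via `Real.rpow`. -/
def LpNorm {S A : Type*} [Fintype S] [Fintype A] (r : ℝ) (x : S → A → ℝ) : ℝ :=
  (∑ s, ∑ a, |x s a| ^ r) ^ (1 / r)

end

/-- stationary policy predicate -/
def IsPolicy {S A : Type*} [Fintype A] (π : S → A → ℝ) : Prop :=
  (∀ s a, 0 ≤ π s a) ∧ ∀ s, ∑ a, π s a = 1

/-! Envelope theorem. Writing `N(π) = ‖d^π‖_q`, the derivative of `N` at `π` is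
`∑ (d^π(s,a) / N)^(q-1) • Dd^π(s,a)`, so `DF(π)[u] = ∑ R*(s,a) Dd^π(s,a)[u]`: at `π`, the robust
return `F` has the same derivative as the ordinary return `ρ_{R*}` under the frozen worst-case
reward. The latter is the classical policy gradient `∑ d^π(s) Q*(s,a) u(s,a)`, obtained by
differentiating `(I - γ P^π)⁻¹` as `W (γ P^u) W` with `W = (I - γ P^π)⁻¹`. -/

open Matrix

noncomputable section

section Resolvent

-- With the max-row-sum norm, `‖γ P^π‖ ≤ γ < 1`, so `I - γ P^π` is inverted by a Neumann series.
attribute [local instance] Matrix.linftyOpNormedRing Matrix.linftyOpNormedAlgebra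

section

variable {n : Type*} [Fintype n] [DecidableEq n]

theorem linfty_opNorm_le_one_of_mem_rowStochastic {M : Matrix n n ℝ}
    (hM : M ∈ rowStochastic ℝ n) : ‖M‖ ≤ 1 := by
  rw [linfty_opNorm_def]
  refine NNReal.coe_le_one.2 (Finset.sup_le fun i _ => ?_)
  rw [← NNReal.coe_le_coe]
  push_cast
  simp_rw [Real.norm_of_nonneg (nonneg_of_mem_rowStochastic hM), sum_row_of_mem_rowStochastic hM]
  rfl

theorem norm_smul_lt_one_of_mem_rowStochastic {M : Matrix n n ℝ} (hM : M ∈ rowStochastic ℝ n)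
    {γ : ℝ} (hγ0 : 0 ≤ γ) (hγ1 : γ < 1) : ‖γ • M‖ < 1 :=
  calc ‖γ • M‖ ≤ ‖γ‖ * ‖M‖ := norm_smul_le γ M
    _ ≤ γ * 1 := by
      rw [Real.norm_of_nonneg hγ0]
      exact mul_le_mul_of_nonneg_left (linfty_opNorm_le_one_of_mem_rowStochastic hM) hγ0
    _ < 1 := by linarith

theorem inv_one_sub_eq_tsum {B : Matrix n n ℝ} (hB : ‖B‖ < 1) :
    (1 - B)⁻¹ = ∑' k : ℕ, B ^ k := by
  rw [nonsing_inv_eq_ringInverse, NormedRing.inverse_one_sub B hB]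
  rfl

theorem inv_one_sub_nonneg {B : Matrix n n ℝ} (hB0 : ∀ i j, 0 ≤ B i j) (hB : ‖B‖ < 1)
    (i j : n) : 0 ≤ (1 - B)⁻¹ i j := by
  have hsum := ((entryLinearMap ℝ ℝ i j).toContinuousLinearMap.hasSum
    (summable_geometric_of_norm_lt_one hB).hasSum)
  rw [inv_one_sub_eq_tsum hB]
  exact hsum.nonneg fun k => pow_apply_nonneg hB0 k i j

theorem le_vecMul_inv_one_sub {B : Matrix n n ℝ} (hB0 : ∀ i j, 0 ≤ B i j) (hB : ‖B‖ < 1)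
    {v : n → ℝ} (hv : ∀ i, 0 ≤ v i) (i : n) : v i ≤ (v ᵥ* (1 - B)⁻¹) i := by
  have hW : (1 - B)⁻¹ = 1 + B * (1 - B)⁻¹ := by
    have h := mul_nonsing_inv (1 - B) ((isUnit_iff_isUnit_det _).1 (Units.oneSub B hB).isUnit)
    rw [sub_mul, one_mul] at h
    exact eq_add_of_sub_eq h
  rw [hW, vecMul_add, vecMul_one, ← vecMul_vecMul, Pi.add_apply, le_add_iff_nonneg_right]
  exact sum_nonneg fun j _ => mul_nonneg (sum_nonneg fun k _ => mul_nonneg (hv k) (hB0 k j))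
    (inv_one_sub_nonneg hB0 hB j i)

end

variable {S A : Type*} [Fintype S] [Fintype A] [DecidableEq S]

theorem Pmat_mem_rowStochastic {P : S → A → S → ℝ} (hP : ∀ s a s', 0 ≤ P s a s')
    (hPsum : ∀ s a, ∑ s', P s a s' = 1) {π : S → A → ℝ} (hπ : IsPolicy π) :
    Pmat P π ∈ rowStochastic ℝ S := by
  refine mem_rowStochastic_iff_sum.2 ⟨fun s t => ?_, fun s => ?_⟩
  · exact sum_nonneg fun a _ => mul_nonneg (hπ.1 s a) (hP s a t)
  · simp only [Pmat]
    rw [sum_comm]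
    simp_rw [← mul_sum, hPsum, mul_one, hπ.2 s]

theorem isUnit_one_sub_smul_Pmat {γ : ℝ} (hγ0 : 0 ≤ γ) (hγ1 : γ < 1) {P : S → A → S → ℝ}
    (hP : ∀ s a s', 0 ≤ P s a s') (hPsum : ∀ s a, ∑ s', P s a s' = 1) {π : S → A → ℝ}
    (hπ : IsPolicy π) : IsUnit (1 - γ • Pmat P π) :=
  (Units.oneSub _
    (norm_smul_lt_one_of_mem_rowStochastic (Pmat_mem_rowStochastic hP hPsum hπ) hγ0 hγ1)).isUnit

theorem dPi_pos {γ : ℝ} (hγ0 : 0 ≤ γ) (hγ1 : γ < 1) {P : S → A → S → ℝ}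
    (hP : ∀ s a s', 0 ≤ P s a s') (hPsum : ∀ s a, ∑ s', P s a s' = 1) {π : S → A → ℝ}
    (hπ : IsPolicy π) {μ : S → ℝ} (hμ : ∀ s, 0 < μ s) (s : S) : 0 < dPi γ P μ π s := by
  have hM := Pmat_mem_rowStochastic hP hPsum hπ
  exact (hμ s).trans_le <| le_vecMul_inv_one_sub
    (fun s t => mul_nonneg hγ0 (nonneg_of_mem_rowStochastic hM))
    (norm_smul_lt_one_of_mem_rowStochastic hM hγ0 hγ1) (fun t => (hμ t).le) s

def PmatLinear (P : S → A → S → ℝ) : (S → A → ℝ) →ₗ[ℝ] Matrix S S ℝ where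
  toFun := Pmat P
  map_add' x y := by ext; simp [Pmat, add_mul, sum_add_distrib]
  map_smul' c x := by ext; simp [Pmat, mul_sum, mul_assoc]

theorem hasFDerivAt_inv_one_sub_smul_Pmat {γ : ℝ} {P : S → A → S → ℝ} {π : S → A → ℝ}
    (hunit : IsUnit (1 - γ • Pmat P π)) :
    HasFDerivAt (fun x => (1 - γ • Pmat P x)⁻¹)
      ((ContinuousLinearMap.mulLeftRight ℝ (Matrix S S ℝ) (1 - γ • Pmat P π)⁻¹
        (1 - γ • Pmat P π)⁻¹).comp (γ • (PmatLinear P).toContinuousLinearMap)) π := by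
  obtain ⟨w, hw⟩ := hunit
  have hW : (1 - γ • Pmat P π)⁻¹ = ↑w⁻¹ := by
    rw [nonsing_inv_eq_ringInverse, ← hw, Ring.inverse_unit]
  have hinner : HasFDerivAt (fun x => 1 - γ • Pmat P x)
      (-(γ • (PmatLinear P).toContinuousLinearMap)) π :=
    (γ • (PmatLinear P).toContinuousLinearMap).hasFDerivAt.const_sub 1
  have hinv := hasFDerivAt_ringInverse (𝕜 := ℝ) w
  rw [hw] at hinv
  rw [hW]
  simp_rw [nonsing_inv_eq_ringInverse]
  refine (hinv.comp π hinner).congr_fderiv ?_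
  ext u : 1
  set W : Matrix S S ℝ := ↑w⁻¹
  change -(W * -(γ • Pmat P u) * W) = W * (γ • Pmat P u) * W
  rw [mul_neg, neg_mul, neg_neg]

variable {γ : ℝ} {P : S → A → S → ℝ} {μ : S → ℝ} {π : S → A → ℝ}

theorem hasFDerivAt_dPi (hunit : IsUnit (1 - γ • Pmat P π)) (s : S) :
    HasFDerivAt (fun x => dPi γ P μ x s)
      (∑ t, μ t • (entryLinearMap ℝ ℝ t s).toContinuousLinearMap.comp
        ((ContinuousLinearMap.mulLeftRight ℝ (Matrix S S ℝ) (1 - γ • Pmat P π)⁻¹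
          (1 - γ • Pmat P π)⁻¹).comp (γ • (PmatLinear P).toContinuousLinearMap))) π :=
  HasFDerivAt.fun_sum fun t _ => ((entryLinearMap ℝ ℝ t s).toContinuousLinearMap.hasFDerivAt.comp π
    (hasFDerivAt_inv_one_sub_smul_Pmat hunit)).const_smul (μ t)

theorem fderiv_dPi_apply (hunit : IsUnit (1 - γ • Pmat P π)) (s : S) (u : S → A → ℝ) :
    fderiv ℝ (fun x => dPi γ P μ x s) π u =
      (dPi γ P μ π ᵥ* (γ • Pmat P u) ᵥ* (1 - γ • Pmat P π)⁻¹) s := by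
  rw [(hasFDerivAt_dPi hunit s).fderiv, show dPi γ P μ π = μ ᵥ* (1 - γ • Pmat P π)⁻¹ from rfl,
    vecMul_vecMul, vecMul_vecMul, ← mul_assoc]
  simp only [FunLike.coe_sum, Finset.sum_apply, FunLike.coe_smul, Pi.smul_apply]
  rfl

theorem differentiableAt_dSA (hunit : IsUnit (1 - γ • Pmat P π)) (s : S) (a : A) :
    DifferentiableAt ℝ (fun x => dSA γ P μ x s a) π :=
  (hasFDerivAt_dPi hunit s).differentiableAt.mul (by fun_prop)

theorem fderiv_dSA_apply (hunit : IsUnit (1 - γ • Pmat P π)) (s : S) (a : A) (u : S → A → ℝ) :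
    fderiv ℝ (fun x => dSA γ P μ x s a) π u =
      dPi γ P μ π s * u s a + π s a * (dPi γ P μ π ᵥ* (γ • Pmat P u) ᵥ* (1 - γ • Pmat P π)⁻¹) s := by
  have happly := ((ContinuousLinearMap.proj (R := ℝ) a).comp
    (ContinuousLinearMap.proj (R := ℝ) (φ := fun _ : S => A → ℝ) s)).hasFDerivAt (x := π)
  have hmul : HasFDerivAt (fun x => dSA γ P μ x s a) _ π := (hasFDerivAt_dPi hunit s).mul happly
  rw [hmul.fderiv, ← (hasFDerivAt_dPi hunit s).fderiv]
  exact congrArg (dPi γ P μ π s * u s a + π s a * ·) (fderiv_dPi_apply hunit s u)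

end Resolvent

theorem HasFDerivAt.sum_rpow_rpow_one_div {E ι : Type*} [NormedAddCommGroup E] [NormedSpace ℝ E]
    {s : Finset ι} {f : ι → E → ℝ} {f' : ι → E →L[ℝ] ℝ} {x : E} {q : ℝ} (hq : 1 < q)
    (hf : ∀ i ∈ s, HasFDerivAt (f i) (f' i) x) (hf0 : ∀ i ∈ s, 0 ≤ f i x)
    (hpos : 0 < ∑ i ∈ s, f i x ^ q) :
    HasFDerivAt (fun y => (∑ i ∈ s, f i y ^ q) ^ (1 / q))
      (∑ i ∈ s, (f i x / (∑ j ∈ s, f j x ^ q) ^ (1 / q)) ^ (q - 1) • f' i) x := by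
  set Z := ∑ j ∈ s, f j x ^ q
  have hcoef : ∀ i ∈ s, 1 / q * Z ^ (1 / q - 1) * (q * f i x ^ (q - 1)) =
      (f i x / Z ^ (1 / q)) ^ (q - 1) := by
    intro i hi
    rw [Real.div_rpow (hf0 i hi) (by positivity), ← Real.rpow_mul hpos.le,
      show 1 / q - 1 = -(1 / q * (q - 1)) by field_simp; ring, Real.rpow_neg hpos.le]
    field_simp
  refine ((HasFDerivAt.fun_sum fun i hi => (hf i hi).rpow_const (Or.inr hq.le)).rpow_const
    (Or.inl hpos.ne')).congr_fderiv ?_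
  rw [smul_sum]
  refine sum_congr rfl fun i hi => ?_
  rw [smul_smul, hcoef i hi]

section PolicyGradient

variable {S A : Type*} [Fintype S] [Fintype A] [DecidableEq S]
  {γ : ℝ} {P : S → A → S → ℝ} {μ : S → ℝ} {π : S → A → ℝ}

variable (γ P) in
def stateValue (π R : S → A → ℝ) : S → ℝ :=
  (1 - γ • Pmat P π)⁻¹ *ᵥ fun s => ∑ a, π s a * R s a

variable (γ P) in
def actionValue (π R : S → A → ℝ) (s : S) (a : A) : ℝ :=
  R s a + γ * ∑ t, P s a t * stateValue γ P π R t

theorem hasFDerivAt_mdpReturn (hunit : IsUnit (1 - γ • Pmat P π)) (R : S → A → ℝ) :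
    HasFDerivAt (fun x => mdpReturn γ P μ x R)
      (∑ s, ∑ a, R s a • fderiv ℝ (fun x => dSA γ P μ x s a) π) π :=
  HasFDerivAt.fun_sum fun s _ => HasFDerivAt.fun_sum fun a _ =>
    (differentiableAt_dSA hunit s a).hasFDerivAt.mul_const (R s a)

theorem fderiv_mdpReturn_apply (hunit : IsUnit (1 - γ • Pmat P π)) (R u : S → A → ℝ) :
    fderiv ℝ (fun x => mdpReturn γ P μ x R) π u =
      ∑ s, ∑ a, dPi γ P μ π s * actionValue γ P π R s a * u s a := by
  rw [(hasFDerivAt_mdpReturn hunit R).fderiv]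
  simp only [FunLike.coe_sum, Finset.sum_apply, FunLike.coe_smul, Pi.smul_apply, smul_eq_mul,
    fderiv_dSA_apply hunit, actionValue]
  set d := dPi γ P μ π
  have hvalue : ∑ s, (d ᵥ* (γ • Pmat P u) ᵥ* (1 - γ • Pmat P π)⁻¹) s * ∑ a, π s a * R s a =
      ∑ s, ∑ a, d s * (γ * ∑ t, P s a t * stateValue γ P π R t) * u s a := by
    calc _ = (d ᵥ* (γ • Pmat P u) ᵥ* (1 - γ • Pmat P π)⁻¹) ⬝ᵥ fun s => ∑ a, π s a * R s a := rfl
      _ = d ⬝ᵥ ((γ • Pmat P u) *ᵥ stateValue γ P π R) := by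
          rw [stateValue, ← dotProduct_mulVec, ← dotProduct_mulVec]
      _ = ∑ s, d s * ∑ t, γ * (∑ a, u s a * P s a t) * stateValue γ P π R t := rfl
      _ = _ := by
          simp only [sum_mul, mul_sum]
          refine sum_congr rfl fun s _ => ?_
          rw [sum_comm]
          exact sum_congr rfl fun a _ => sum_congr rfl fun t _ => by ring
  simp only [mul_add, add_mul, sum_add_distrib, mul_sum, sum_mul] at hvalue ⊢
  rw [← hvalue]
  congr 1 <;> exact sum_congr rfl fun s _ => sum_congr rfl fun a _ => by ring

theorem hasFDerivAt_sum_dSA_rpow_one_div [Nonempty S] [Nonempty A]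
    (hunit : IsUnit (1 - γ • Pmat P π)) {q : ℝ} (hq : 1 < q)
    (hpos : ∀ s a, 0 < dSA γ P μ π s a) :
    HasFDerivAt (fun x => (∑ s, ∑ a, dSA γ P μ x s a ^ q) ^ (1 / q))
      (∑ s, ∑ a, (dSA γ P μ π s a / LpNorm q (dSA γ P μ π)) ^ (q - 1) •
        fderiv ℝ (fun x => dSA γ P μ x s a) π) π := by
  have h := HasFDerivAt.sum_rpow_rpow_one_div (s := univ)
    (f := fun i : S × A => fun x => dSA γ P μ x i.1 i.2) hq
    (fun i _ => (differentiableAt_dSA hunit i.1 i.2).hasFDerivAt) (fun i _ => (hpos i.1 i.2).le)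
    (sum_pos (fun i _ => Real.rpow_pos_of_pos (hpos i.1 i.2) q) univ_nonempty)
  simp only [Fintype.sum_prod_type] at h
  simpa only [LpNorm, abs_of_pos (hpos _ _)] using h

end PolicyGradient

end

theorem stmt_19_general {S A : Type*} [Fintype S] [Fintype A] [Nonempty S] [Nonempty A] [DecidableEq S]
    (γ : ℝ) (hγ0 : 0 ≤ γ) (hγ1 : γ < 1)
    (P : S → A → S → ℝ) (hP : ∀ s a s', 0 ≤ P s a s')
    (hPsum : ∀ s a, ∑ s', P s a s' = 1)
    (μ : S → ℝ) (hμ : ∀ s, 0 < μ s)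
    (R₀ : S → A → ℝ) (α : ℝ)
    (p q : ℝ) (hp : 1 < p) (hq : q = p / (p - 1))
    (D : (S → A → ℝ) → S → A → ℝ)
    (hD : ∀ (π : S → A → ℝ) s a, D π s a = dPi γ P μ π s * π s a)
    (F : (S → A → ℝ) → ℝ)
    (hF : ∀ π : S → A → ℝ, F π =
      (∑ s, ∑ a, D π s a * R₀ s a) - α * (∑ s, ∑ a, D π s a ^ q) ^ (1 / q))
    (π : S → A → ℝ) (hπpol : IsPolicy π) (hπpos : ∀ s a, 0 < π s a)
    (Rstar : S → A → ℝ)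
    (hRstar : ∀ s a, Rstar s a =
      R₀ s a - α * (D π s a / LpNorm q (D π)) ^ (q - 1))
    (vstar : S → ℝ)
    (hvstar : ∀ s, vstar s =
      ∑ s', (1 - γ • Pmat P π)⁻¹ s s' * ∑ a, π s' a * Rstar s' a)
    (Qstar : S → A → ℝ)
    (hQstar : ∀ s a, Qstar s a = Rstar s a + γ * ∑ s', P s a s' * vstar s') :
    DifferentiableAt ℝ F π ∧
    ∀ u : S → A → ℝ, fderiv ℝ F π u =
      ∑ s, ∑ a, dPi γ P μ π s * Qstar s a * u s a := by
  have hq1 : 1 < q := by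
    rw [hq, lt_div_iff₀ (by linarith)]
    linarith
  have hunit := isUnit_one_sub_smul_Pmat hγ0 hγ1 hP hPsum hπpol
  obtain rfl : D = dSA γ P μ := funext fun x => funext fun s => funext fun a => hD x s a
  have hpos : ∀ s a, 0 < dSA γ P μ π s a := fun s a =>
    mul_pos (dPi_pos hγ0 hγ1 hP hPsum hπpol hμ s) (hπpos s a)
  have hF' : HasFDerivAt F (fderiv ℝ (fun x => mdpReturn γ P μ x Rstar) π) π := by
    rw [funext hF, (hasFDerivAt_mdpReturn hunit Rstar).fderiv]
    refine ((hasFDerivAt_mdpReturn hunit R₀).sub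
      ((hasFDerivAt_sum_dSA_rpow_one_div hunit hq1 hpos).const_mul α)).congr_fderiv ?_
    simp only [hRstar, smul_sum, smul_smul, ← sum_sub_distrib]
    exact sum_congr rfl fun s _ => sum_congr rfl fun a _ => (sub_smul _ _ _).symm
  refine ⟨hF'.differentiableAt, fun u => ?_⟩
  have hQ : Qstar = actionValue γ P π Rstar := by
    have hv : vstar = stateValue γ P π Rstar := funext hvstar
    exact funext fun s => funext fun a => by rw [hQstar, hv, actionValue]
  rw [hF'.fderiv, fderiv_mdpReturn_apply hunit, hQ]

theorem stmt_19 {S A : Type*} [Fintype S] [Fintype A] [Nonempty S] [Nonempty A] [DecidableEq S]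
    (γ : ℝ) (hγ0 : 0 ≤ γ) (hγ1 : γ < 1)
    (P : S → A → S → ℝ) (hP : ∀ s a s', 0 ≤ P s a s')
    (hPsum : ∀ s a, ∑ s', P s a s' = 1)
    (μ : S → ℝ) (hμ : ∀ s, 0 < μ s) (hμsum : ∑ s, μ s = 1)
    (R₀ : S → A → ℝ) (α : ℝ) (hα : 0 < α)
    (p q : ℝ) (hp : 1 < p) (hq : q = p / (p - 1))
    (D : (S → A → ℝ) → S → A → ℝ)
    (hD : ∀ (π : S → A → ℝ) s a, D π s a = dPi γ P μ π s * π s a)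
    (F : (S → A → ℝ) → ℝ)
    (hF : ∀ π : S → A → ℝ, F π =
      (∑ s, ∑ a, D π s a * R₀ s a) - α * (∑ s, ∑ a, D π s a ^ q) ^ (1 / q))
    (π : S → A → ℝ) (hπpol : IsPolicy π) (hπpos : ∀ s a, 0 < π s a)
    (Rstar : S → A → ℝ)
    (hRstar : ∀ s a, Rstar s a =
      R₀ s a - α * (D π s a / LpNorm q (D π)) ^ (q - 1))
    (vstar : S → ℝ)
    (hvstar : ∀ s, vstar s =
      ∑ s', (1 - γ • Pmat P π)⁻¹ s s' * ∑ a, π s' a * Rstar s' a)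
    (Qstar : S → A → ℝ)
    (hQstar : ∀ s a, Qstar s a = Rstar s a + γ * ∑ s', P s a s' * vstar s') :
    DifferentiableAt ℝ F π ∧
    ∀ u : S → A → ℝ, fderiv ℝ F π u =
      ∑ s, ∑ a, dPi γ P μ π s * Qstar s a * u s a :=
  stmt_19_general γ hγ0 hγ1 P hP hPsum μ hμ R₀ α p q hp hq D hD F hF π hπpol hπpos Rstar hRstar
    vstar hvstar Qstar hQstar
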